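/- Let F_q be a finite field and G a finite group with gcd(|G|, q) = 1. For an irreducible representation ρ of G over the algebraic closure of F_q, with d = dim ρ and s(ρ) the size of the orbit of (the isomorphism class of) ρ under the Frobenius action σ∘ρ, the two-sided ideal of F_q[G] generated by e[ρ] = Σ_{ρ'∈[ρ]} e(ρ') has F_q-dimension s(ρ)·d². -/

import Mathlib

open scoped BigOperators

namespace GroupCodeHulls

variable {K : Type*} [Field K] {G : Type*} [Group G]

/-- A (matrix) representation of `G` over `K` of degree `d`. -/
abbrev MatRep (K : Type*) [Field K] (G : Type*) [Group G] (d : ℕ) : Type _ :=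
  G →* (Matrix (Fin d) (Fin d) K)ˣ

/-- A subspace `W ⊆ K^d` is invariant under the representation `ρ`. -/
def IsInvariant {d : ℕ} (ρ : MatRep K G d) (W : Submodule K (Fin d → K)) : Prop :=
  ∀ g : G, ∀ x ∈ W, (ρ g : Matrix (Fin d) (Fin d) K).mulVec x ∈ W

/-- `ρ` is an irreducible representation. -/
def IsIrreducible {d : ℕ} (ρ : MatRep K G d) : Prop :=
  0 < d ∧ ∀ W : Submodule K (Fin d → K), IsInvariant ρ W → W = ⊥ ∨ W = ⊤

/-- Two representations are isomorphic. -/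
def IsoRep {d₁ d₂ : ℕ} (ρ₁ : MatRep K G d₁) (ρ₂ : MatRep K G d₂) : Prop :=
  ∃ T : (Fin d₁ → K) ≃ₗ[K] (Fin d₂ → K),
    ∀ (g : G) (x : Fin d₁ → K),
      T ((ρ₁ g : Matrix (Fin d₁) (Fin d₁) K).mulVec x)
        = (ρ₂ g : Matrix (Fin d₂) (Fin d₂) K).mulVec (T x)

/-- The character of a representation. -/
noncomputable def charOf {d : ℕ} (ρ : MatRep K G d) (g : G) : K :=
  Matrix.trace (ρ g : Matrix (Fin d) (Fin d) K)

/-- The element `e(ρ) = (d/|G|) ∑_g χ_ρ(g⁻¹) g` of the group algebra. -/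
noncomputable def repIdem [Fintype G] {d : ℕ} (ρ : MatRep K G d) : MonoidAlgebra K G :=
  ∑ g : G, MonoidAlgebra.single g ((d : K) * (Fintype.card G : K)⁻¹ * charOf ρ g⁻¹)

/-- The "transpose-inverse" of an invertible matrix, as a unit. -/
def contraUnit {n : Type*} [Fintype n] [DecidableEq n] (u : (Matrix n n K)ˣ) :
    (Matrix n n K)ˣ where
  val := Matrix.transpose (↑u⁻¹ : Matrix n n K)
  inv := Matrix.transpose (↑u : Matrix n n K)
  val_inv := by
    rw [← Matrix.transpose_mul, ← Units.val_mul, mul_inv_cancel, Units.val_one,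
      Matrix.transpose_one]
  inv_val := by
    rw [← Matrix.transpose_mul, ← Units.val_mul, inv_mul_cancel, Units.val_one,
      Matrix.transpose_one]

/-- The contragredient representation `g ↦ ᵀρ(g)⁻¹`. -/
def contra {d : ℕ} (ρ : MatRep K G d) : MatRep K G d where
  toFun g := contraUnit (ρ g)
  map_one' := by
    ext
    simp [contraUnit]
  map_mul' g h := by
    ext
    simp [contraUnit, mul_inv_rev, Matrix.transpose_mul]

/-- The Galois twist `σ ∘ ρ` of a representation. -/
def galConj {k : Type*} [Field k] [Algebra k K] (σ : K ≃ₐ[k] K) {d : ℕ}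
    (ρ : MatRep K G d) : MatRep K G d :=
  (Units.map (AlgEquiv.mapMatrix σ :
      Matrix (Fin d) (Fin d) K ≃ₐ[k] Matrix (Fin d) (Fin d) K)) |>.comp ρ

/-- `ρ₂` lies in the Galois orbit of (the isomorphism class of) `ρ₁`. -/
def SameOrbit (k : Type*) [Field k] [Algebra k K] {d₁ d₂ : ℕ}
    (ρ₁ : MatRep K G d₁) (ρ₂ : MatRep K G d₂) : Prop :=
  ∃ σ : K ≃ₐ[k] K, IsoRep (galConj σ ρ₁) ρ₂

/-- `τ 0, …, τ (s-1)` is a complete irredundant system of representatives of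
the Galois orbit `[ρ]`; in particular `s = s(ρ)` is the size of the orbit. -/
def OrbitEnum (k : Type*) [Field k] [Algebra k K] {d : ℕ} (ρ : MatRep K G d)
    (s : ℕ) (τ : Fin s → MatRep K G d) : Prop :=
  (∀ i, SameOrbit k ρ (τ i)) ∧
  (∀ i j, i ≠ j → ¬ IsoRep (τ i) (τ j)) ∧
  (∀ σ : K ≃ₐ[k] K, ∃ i, IsoRep (galConj σ ρ) (τ i))

/-- The star operation `(∑ f(g) g)* = ∑ f(g⁻¹) g` on the group algebra. -/
def starG (z : MonoidAlgebra K G) : MonoidAlgebra K G :=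
  MonoidAlgebra.ofCoeff (Finsupp.equivMapDomain (Equiv.inv G) z.coeff)

/-- The Euclidean inner product on the group algebra with basis `G`. -/
noncomputable def eform [Fintype G] (u v : MonoidAlgebra K G) : K :=
  ∑ g : G, u.coeff g * v.coeff g

/-- The underlying `K`-subspace of a two-sided ideal of `K[G]`. -/
def codeSub (C : TwoSidedIdeal (MonoidAlgebra K G)) :
    Submodule K (MonoidAlgebra K G) where
  carrier := C
  add_mem' := C.add_mem
  zero_mem' := C.zero_mem
  smul_mem' c x hx := by
    have h : (c • x : MonoidAlgebra K G) = algebraMap K (MonoidAlgebra K G) c * x :=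
      Algebra.smul_def c x
    simpa [h] using C.mul_mem_left (algebraMap K (MonoidAlgebra K G) c) x hx

/-- The dual code of a two-sided ideal of `K[G]`, as a `K`-subspace. -/
noncomputable def dualSub [Fintype G] (C : TwoSidedIdeal (MonoidAlgebra K G)) :
    Submodule K (MonoidAlgebra K G) where
  carrier := {v | ∀ u ∈ C, eform v u = 0}
  add_mem' := by
    intro a b ha hb u hu
    simp only [Set.mem_setOf_eq] at ha hb ⊢
    have h : eform (a + b) u = eform a u + eform b u := by
      unfold eform
      rw [← Finset.sum_add_distrib]
      exact Finset.sum_congr rfl fun g _ => by rw [MonoidAlgebra.coeff_add, Finsupp.add_apply, add_mul]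
    rw [h, ha u hu, hb u hu, add_zero]
  zero_mem' := by
    intro u hu
    simp [eform]
  smul_mem' := by
    intro c x hx u hu
    simp only [Set.mem_setOf_eq] at hx ⊢
    have h : eform (c • x) u = c * eform x u := by
      unfold eform
      rw [Finset.mul_sum]
      exact Finset.sum_congr rfl fun g _ => by
        rw [MonoidAlgebra.coeff_smul, Finsupp.smul_apply, smul_eq_mul, mul_assoc]
    rw [h, hx u hu, mul_zero]

/-- The hull `h(C) = C ∩ C^⊥` of a group code. -/
noncomputable def hullSub [Fintype G] (C : TwoSidedIdeal (MonoidAlgebra K G)) :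
    Submodule K (MonoidAlgebra K G) :=
  codeSub C ⊓ dualSub C

/-- The dimension of the hull of a group code. -/
noncomputable def hullDim [Fintype G] (C : TwoSidedIdeal (MonoidAlgebra K G)) : ℕ :=
  Module.finrank K ↥(hullSub C)

/-!
Over `K = F̄_q` the order of `G` is invertible, and each `τ i` is irreducible, being isomorphic to
a Galois twist of `ρ`. Schur's lemma then gives the orthogonality relations for the matrix
coefficients of the pairwise non-isomorphic `τ i`. Hence `Φ = (τ i)_i : K[G] → ∏ᵢ M_d(K)` is onto
(the matrix units of the simple components are explicit), `Φ (∑ e(τ i)) = 1`, and `Φ x = 0`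
forces `e(τ i) x = 0`; so left multiplication by `e = ∑ e(τ i)` has the kernel of `Φ`, and its
image has dimension `s d²`.

Over `F_q`, `e₀` has the coefficients of `e`, a class function, so it is central and the ideal it
generates is `e₀ F_q[G]`. Its dimension is the rank of the matrix `(e₀ (g h⁻¹))_{g,h}`, which does
not change when the entries are mapped into `K`.
-/

section

open Matrix

theorem _root_.Matrix.mul_single_one_mul_apply {n R : Type*} [Fintype n] [DecidableEq n]
    [Semiring R] (X Y : Matrix n n R) (a c b e : n) :
    (X * single a c 1 * Y : Matrix n n R) b e = X b a * Y c e := by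
  rw [mul_apply, Finset.sum_eq_single c (fun i _ hi => by
    rw [mul_single_apply_of_ne _ _ _ _ _ hi, zero_mul]) (by simp), mul_single_apply_same, mul_one]

theorem _root_.Matrix.rank_map {k L : Type*} [Field k] [Field L] (f : k →+* L) {n : Type*}
    [Fintype n] [DecidableEq n] (M : Matrix n n k) : (M.map f).rank = M.rank := by
  classical
  obtain ⟨P, Q, D, rfl⟩ := Pivot.exists_list_transvec_mul_diagonal_mul_list_transvec M
  have hdet : ∀ L : List (TransvectionStruct n k),
      IsUnit ((L.map TransvectionStruct.toMatrix).prod).det ∧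
        IsUnit (((L.map TransvectionStruct.toMatrix).prod).map f).det := fun L => by
    have h1 := TransvectionStruct.det_toMatrix_prod L
    refine ⟨h1 ▸ isUnit_one, ?_⟩
    rw [← RingHom.mapMatrix_apply, ← RingHom.map_det, h1, map_one]
    exact isUnit_one
  rw [Matrix.map_mul, Matrix.map_mul, rank_mul_eq_left_of_isUnit_det _ _ (hdet Q).2,
    rank_mul_eq_right_of_isUnit_det _ _ (hdet P).2, rank_mul_eq_left_of_isUnit_det _ _ (hdet Q).1,
    rank_mul_eq_right_of_isUnit_det _ _ (hdet P).1, diagonal_map (map_zero f), rank_diagonal,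
    rank_diagonal]
  exact Fintype.card_congr (Equiv.subtypeEquivRight fun i => map_ne_zero f)

theorem _root_.Nat.Coprime.isUnit_natCast {R : Type*} [CommRing R] {m n : ℕ}
    (hm : (m : R) = 0) (hnm : n.Coprime m) : IsUnit (n : R) := by
  obtain ⟨u, v, huv⟩ := Nat.isCoprime_iff_coprime.2 hnm
  refine .of_mul_eq_one (u : R) ?_
  simpa [hm, mul_comm] using congrArg (Int.cast : ℤ → R) huv

theorem _root_.TwoSidedIdeal.mem_span_singleton_of_commute {R : Type*} [Ring R] {e : R}
    (he : ∀ x, e * x = x * e) {x : R} : x ∈ TwoSidedIdeal.span {e} ↔ ∃ y, e * y = x := by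
  refine ⟨fun hx => ?_, fun ⟨y, hy⟩ =>
    hy ▸ TwoSidedIdeal.mul_mem_right _ _ _ (TwoSidedIdeal.subset_span rfl)⟩
  induction hx using TwoSidedIdeal.span_induction with
  | mem x hx => exact ⟨1, by rw [Set.mem_singleton_iff.1 hx, mul_one]⟩
  | zero => exact ⟨0, mul_zero e⟩
  | add x y _ _ hx hy =>
    obtain ⟨⟨a, rfl⟩, ⟨b, rfl⟩⟩ := And.intro hx hy
    exact ⟨a + b, mul_add e a b⟩
  | neg x _ hx => obtain ⟨a, rfl⟩ := hx; exact ⟨-a, mul_neg e a⟩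
  | left_absorb b x _ hx =>
    obtain ⟨a, rfl⟩ := hx; exact ⟨b * a, by rw [← mul_assoc, he, mul_assoc]⟩
  | right_absorb b x _ hx => obtain ⟨a, rfl⟩ := hx; exact ⟨a * b, (mul_assoc e a b).symm⟩

theorem _root_.MonoidAlgebra.mul_comm_of_coeff_mul_comm {k G : Type*} [CommSemiring k] [Group G]
    {f : MonoidAlgebra k G} (hf : ∀ a b, f.coeff (a * b) = f.coeff (b * a))
    (x : MonoidAlgebra k G) : f * x = x * f := by
  induction x using MonoidAlgebra.induction_linear with
  | zero => rw [mul_zero, zero_mul]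
  | add x y hx hy => rw [mul_add, add_mul, hx, hy]
  | single g r =>
    ext h
    rw [MonoidAlgebra.coeff_mul_single_apply, MonoidAlgebra.coeff_single_mul_apply, hf, mul_comm]

theorem _root_.MonoidAlgebra.toMatrix_basis_mulLeft_apply {k G : Type*} [Field k] [Group G]
    [Fintype G] [DecidableEq G] (a : MonoidAlgebra k G) (g h : G) :
    LinearMap.toMatrix (MonoidAlgebra.basis G k) (MonoidAlgebra.basis G k)
      (LinearMap.mulLeft k a) g h = a.coeff (g * h⁻¹) := by
  rw [LinearMap.toMatrix_apply, MonoidAlgebra.basis_apply, LinearMap.mulLeft_apply]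
  exact (MonoidAlgebra.coeff_mul_single_apply a 1 h g).trans (mul_one _)

theorem _root_.MonoidAlgebra.finrank_range_mulLeft_eq_of_coeff_map {k L G : Type*} [Field k]
    [Field L] [Group G] [Fintype G] (f : k →+* L) {a : MonoidAlgebra k G}
    {b : MonoidAlgebra L G} (hab : ∀ g, f (a.coeff g) = b.coeff g) :
    Module.finrank L (LinearMap.range (LinearMap.mulLeft L b))
      = Module.finrank k (LinearMap.range (LinearMap.mulLeft k a)) := by
  classical
  set bk := MonoidAlgebra.basis G k
  set bL := MonoidAlgebra.basis G L
  have hmap : LinearMap.toMatrix bL bL (LinearMap.mulLeft L b)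
      = (LinearMap.toMatrix bk bk (LinearMap.mulLeft k a)).map f := by
    ext g h
    rw [map_apply, MonoidAlgebra.toMatrix_basis_mulLeft_apply,
      MonoidAlgebra.toMatrix_basis_mulLeft_apply, hab]
  rw [← toLin_toMatrix bL bL (LinearMap.mulLeft L b), ← rank_eq_finrank_range_toLin, hmap,
    Matrix.rank_map, rank_eq_finrank_range_toLin _ bk bk, toLin_toMatrix]

theorem codeSub_span_singleton_of_commute {e : MonoidAlgebra K G} (he : ∀ x, e * x = x * e) :
    codeSub (TwoSidedIdeal.span {e}) = LinearMap.range (LinearMap.mulLeft K e) := by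
  ext x
  exact TwoSidedIdeal.mem_span_singleton_of_commute he

variable {d : ℕ}

theorem IsIrreducible.of_intertwining {σ : K →+* K} [RingHomSurjective σ]
    {ρ₁ ρ₂ : MatRep K G d} (T : (Fin d → K) →ₛₗ[σ] (Fin d → K)) (hT : Function.Bijective T)
    (hTρ : ∀ g x, T ((ρ₁ g).val *ᵥ x) = (ρ₂ g).val *ᵥ T x) (h : IsIrreducible ρ₁) :
    IsIrreducible ρ₂ := by
  refine ⟨h.1, fun W hW => ?_⟩
  have hcomap : IsInvariant ρ₁ (W.comap T) := fun g x hx => by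
    simpa only [Submodule.mem_comap, hTρ] using hW g _ hx
  have hinj := Submodule.comap_injective_of_surjective hT.2
  rcases h.2 _ hcomap with hbot | htop
  · exact Or.inl (hinj (hbot.trans (LinearMap.ker_eq_bot_of_injective hT.1).symm))
  · exact Or.inr (hinj (htop.trans (Submodule.comap_top T).symm))

theorem IsIrreducible.of_isoRep {ρ₁ ρ₂ : MatRep K G d} (hiso : IsoRep ρ₁ ρ₂)
    (h : IsIrreducible ρ₁) : IsIrreducible ρ₂ :=
  let ⟨T, hT⟩ := hiso
  h.of_intertwining T.toLinearMap T.bijective hT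

theorem IsIrreducible.galConj {k : Type*} [Field k] [Algebra k K] (σ : K ≃ₐ[k] K)
    {ρ : MatRep K G d} (h : IsIrreducible ρ) : IsIrreducible (galConj σ ρ) := by
  let T : (Fin d → K) →ₛₗ[(σ.toRingEquiv : K →+* K)] (Fin d → K) :=
    { toFun := fun x i => σ (x i)
      map_add' := fun x y => by ext; simp
      map_smul' := fun c x => by ext; simp }
  refine h.of_intertwining T ⟨fun x y hxy => ?_, fun y => ⟨fun i => σ.symm (y i), ?_⟩⟩
    fun g x => funext fun i => RingHom.map_mulVec (σ.toRingEquiv : K →+* K) _ x i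
  · funext i; exact σ.injective (congrFun hxy i)
  · funext i; exact σ.apply_symm_apply (y i)

theorem intertwiner_eq_zero_or_injective {ρ₁ ρ₂ : MatRep K G d} (h₂ : IsIrreducible ρ₂)
    {S : Matrix (Fin d) (Fin d) K} (hS : ∀ g, (ρ₁ g).val * S = S * (ρ₂ g).val) :
    S = 0 ∨ Function.Injective S.mulVecLin := by
  have hker : IsInvariant ρ₂ (LinearMap.ker S.mulVecLin) := fun g x hx => by
    rw [LinearMap.mem_ker, mulVecLin_apply] at hx ⊢
    rw [mulVec_mulVec, ← hS, ← mulVec_mulVec, hx, mulVec_zero]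
  rcases h₂.2 _ hker with hbot | htop
  · exact Or.inr (LinearMap.ker_eq_bot.1 hbot)
  · exact Or.inl (Matrix.toLin'.map_eq_zero_iff.1 (LinearMap.ker_eq_top.1 htop))

theorem intertwiner_eq_zero_of_not_isoRep {ρ₁ ρ₂ : MatRep K G d} (h₂ : IsIrreducible ρ₂)
    (hni : ¬ IsoRep ρ₂ ρ₁) {S : Matrix (Fin d) (Fin d) K}
    (hS : ∀ g, (ρ₁ g).val * S = S * (ρ₂ g).val) : S = 0 := by
  refine (intertwiner_eq_zero_or_injective h₂ hS).resolve_right fun hinj => hni ?_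
  have hbij : Function.Bijective S.mulVecLin :=
    ⟨hinj, LinearMap.injective_iff_surjective.1 hinj⟩
  refine ⟨LinearEquiv.ofBijective S.mulVecLin hbij, fun g x => ?_⟩
  simp only [LinearEquiv.ofBijective_apply, mulVecLin_apply, mulVec_mulVec, hS]

theorem exists_eq_smul_one_of_commute [IsAlgClosed K] {ρ : MatRep K G d} (h : IsIrreducible ρ)
    {S : Matrix (Fin d) (Fin d) K} (hS : ∀ g, (ρ g).val * S = S * (ρ g).val) :
    ∃ c : K, S = c • 1 := by
  have : Nonempty (Fin d) := ⟨⟨0, h.1⟩⟩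
  obtain ⟨c, hc⟩ := Module.End.exists_eigenvalue S.mulVecLin
  obtain ⟨v, hv, hv0⟩ := hc.exists_hasEigenvector
  refine ⟨c, sub_eq_zero.1 ((intertwiner_eq_zero_or_injective (ρ₁ := ρ) h (S := S - c • 1)
    fun g => by simp [mul_sub, sub_mul, hS]).resolve_right fun hinj => hv0 (hinj ?_))⟩
  simpa [sub_mulVec, smul_mulVec, sub_eq_zero] using Module.End.mem_eigenspace_iff.1 hv

noncomputable def fourier (ρ : MatRep K G d) :
    MonoidAlgebra K G →ₐ[K] Matrix (Fin d) (Fin d) K :=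
  MonoidAlgebra.lift K (Matrix (Fin d) (Fin d) K) G ((Units.coeHom _).comp ρ)

theorem fourier_single (ρ : MatRep K G d) (g : G) (c : K) :
    fourier ρ (MonoidAlgebra.single g c) = c • (ρ g).val := by
  simp [fourier, MonoidAlgebra.lift_single]

variable [Fintype G]

theorem fourier_apply (ρ : MatRep K G d) (x : MonoidAlgebra K G) :
    fourier ρ x = ∑ g, x.coeff g • (ρ g).val := by
  rw [fourier, MonoidAlgebra.lift_apply, Finsupp.sum_fintype _ _ (by simp)]
  rfl

noncomputable def average (ρ₁ ρ₂ : MatRep K G d) (A : Matrix (Fin d) (Fin d) K) :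
    Matrix (Fin d) (Fin d) K :=
  ∑ g, (ρ₁ g⁻¹).val * A * (ρ₂ g).val

theorem mul_average (ρ₁ ρ₂ : MatRep K G d) (A : Matrix (Fin d) (Fin d) K) (h : G) :
    (ρ₁ h).val * average ρ₁ ρ₂ A = average ρ₁ ρ₂ A * (ρ₂ h).val := by
  rw [average, Finset.mul_sum, Finset.sum_mul]
  refine Fintype.sum_equiv (Equiv.mulRight h⁻¹) _ _ fun g => ?_
  simp only [Equiv.coe_mulRight, _root_.mul_inv_rev, inv_inv, map_mul, map_inv, Units.val_mul,
    mul_assoc, Units.inv_mul, mul_one]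

theorem average_eq_zero_of_not_isoRep {ρ₁ ρ₂ : MatRep K G d} (h₂ : IsIrreducible ρ₂)
    (hni : ¬ IsoRep ρ₂ ρ₁) (A : Matrix (Fin d) (Fin d) K) : average ρ₁ ρ₂ A = 0 :=
  intertwiner_eq_zero_of_not_isoRep h₂ hni (mul_average ρ₁ ρ₂ A)

theorem trace_average_self (ρ : MatRep K G d) (A : Matrix (Fin d) (Fin d) K) :
    (average ρ ρ A).trace = Fintype.card G * A.trace := by
  simp [average, trace_sum, trace_mul_cycle]

theorem natCast_smul_average_self [IsAlgClosed K] {ρ : MatRep K G d} (h : IsIrreducible ρ)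
    (A : Matrix (Fin d) (Fin d) K) :
    (d : K) • average ρ ρ A = (Fintype.card G * A.trace) • (1 : Matrix (Fin d) (Fin d) K) := by
  obtain ⟨c, hc⟩ := exists_eq_smul_one_of_commute h (mul_average ρ ρ A)
  have htr := trace_average_self ρ A
  rw [hc, trace_smul, trace_one, Fintype.card_fin, smul_eq_mul] at htr
  rw [← htr, hc, smul_smul, mul_comm]

/-- The matrix unit `E_{ab}` of the simple component of `K[G]` belonging to `ρ`. -/
noncomputable def matrixUnit (ρ : MatRep K G d) (a b : Fin d) : MonoidAlgebra K G :=
  ((d : K) * (Fintype.card G : K)⁻¹) • ∑ g, MonoidAlgebra.single g ((ρ g⁻¹).val b a)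

theorem fourier_matrixUnit_apply (ρ₁ ρ₂ : MatRep K G d) (a b c e : Fin d) :
    fourier ρ₂ (matrixUnit ρ₁ a b) c e
      = (d : K) * (Fintype.card G : K)⁻¹ * average ρ₁ ρ₂ (single a c 1) b e := by
  simp only [matrixUnit, map_smul, map_sum, fourier_single, Matrix.smul_apply, Matrix.sum_apply,
    average, mul_single_one_mul_apply, smul_eq_mul]

theorem fourier_matrixUnit_of_not_isoRep {ρ₁ ρ₂ : MatRep K G d} (h₂ : IsIrreducible ρ₂)
    (hni : ¬ IsoRep ρ₂ ρ₁) (a b : Fin d) : fourier ρ₂ (matrixUnit ρ₁ a b) = 0 := by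
  ext c e
  rw [fourier_matrixUnit_apply, average_eq_zero_of_not_isoRep h₂ hni, Matrix.zero_apply,
    Matrix.zero_apply, mul_zero]

theorem fourier_matrixUnit_self [IsAlgClosed K] {ρ : MatRep K G d} (h : IsIrreducible ρ)
    (hG : (Fintype.card G : K) ≠ 0) (a b : Fin d) :
    fourier ρ (matrixUnit ρ a b) = single a b 1 := by
  ext c e
  have := congrFun₂ (natCast_smul_average_self h (single a c 1)) b e
  rw [Matrix.smul_apply, Matrix.smul_apply, smul_eq_mul, smul_eq_mul] at this
  rw [fourier_matrixUnit_apply, mul_right_comm, this]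
  by_cases hac : a = c <;> by_cases hbe : b = e <;>
    simp [hac, hbe, trace_single_eq_of_ne, one_apply, hG]

theorem coeff_repIdem (ρ : MatRep K G d) (g : G) :
    (repIdem ρ).coeff g = (d : K) * (Fintype.card G : K)⁻¹ * charOf ρ g⁻¹ := by
  classical
  simp [repIdem, MonoidAlgebra.coeff_sum, Finsupp.single_apply]

theorem coeff_repIdem_mul_comm (ρ : MatRep K G d) (a b : G) :
    (repIdem ρ).coeff (a * b) = (repIdem ρ).coeff (b * a) := by
  rw [coeff_repIdem, coeff_repIdem, charOf, charOf, _root_.mul_inv_rev, _root_.mul_inv_rev,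
    map_mul, map_mul, Units.val_mul, Units.val_mul, trace_mul_comm]

theorem repIdem_eq_sum_matrixUnit (ρ : MatRep K G d) : repIdem ρ = ∑ k, matrixUnit ρ k k := by
  classical
  ext g
  rw [MonoidAlgebra.coeff_sum, Finsupp.finsetSum_apply]
  simp [coeff_repIdem, matrixUnit, MonoidAlgebra.coeff_sum, Finsupp.single_apply, charOf, trace,
    Finset.mul_sum]

theorem coeff_repIdem_mul (ρ : MatRep K G d) (x : MonoidAlgebra K G) (g : G) :
    (repIdem ρ * x).coeff g
      = (d : K) * (Fintype.card G : K)⁻¹ * (fourier ρ x * (ρ g⁻¹).val).trace := by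
  rw [MonoidAlgebra.coeff_mul_apply_left, Finsupp.sum_fintype _ _ (by simp), fourier_apply,
    Finset.sum_mul, trace_sum, Finset.mul_sum]
  refine Fintype.sum_equiv ((Equiv.inv G).trans (Equiv.mulRight g)) _ _ fun h => ?_
  simp only [coeff_repIdem, charOf, Equiv.trans_apply, Equiv.inv_apply, Equiv.coe_mulRight,
    smul_mul, trace_smul, smul_eq_mul, ← Units.val_mul, ← map_mul, mul_inv_cancel_right]
  ring

theorem repIdem_mul_eq_zero {ρ : MatRep K G d} {x : MonoidAlgebra K G}
    (hx : fourier ρ x = 0) : repIdem ρ * x = 0 := by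
  ext g
  simp [coeff_repIdem_mul, hx]

section Orbit

variable [IsAlgClosed K] {s : ℕ} {τ : Fin s → MatRep K G d} (hG : (Fintype.card G : K) ≠ 0)
  (hirr : ∀ i, IsIrreducible (τ i)) (hni : Pairwise fun i j => ¬ IsoRep (τ i) (τ j))
include hG hirr hni

theorem fourier_matrixUnit_eq_ite (i j : Fin s) (a b : Fin d) :
    fourier (τ j) (matrixUnit (τ i) a b) = if i = j then single a b 1 else 0 := by
  split_ifs with hij
  · exact hij ▸ fourier_matrixUnit_self (hirr i) hG a b
  · exact fourier_matrixUnit_of_not_isoRep (hirr j) (hni (Ne.symm hij)) a b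

theorem fourier_sum_repIdem (j : Fin s) : fourier (τ j) (∑ i, repIdem (τ i)) = 1 := by
  simp [repIdem_eq_sum_matrixUnit, fourier_matrixUnit_eq_ite hG hirr hni, sum_single_one]

theorem surjective_pi_fourier : Function.Surjective (AlgHom.pi fun i => fourier (τ i)) := by
  intro m
  refine ⟨∑ i, ∑ a, ∑ b, m i a b • matrixUnit (τ i) a b, funext fun j => ?_⟩
  simp [fourier_matrixUnit_eq_ite hG hirr hni, ← matrix_eq_sum_single]

theorem ker_mulLeft_sum_repIdem :
    LinearMap.ker (LinearMap.mulLeft K (∑ i, repIdem (τ i)))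
      = LinearMap.ker (AlgHom.pi fun i => fourier (τ i)).toLinearMap := by
  ext x
  simp only [LinearMap.mem_ker, LinearMap.mulLeft_apply, AlgHom.toLinearMap_apply]
  constructor
  · intro hx
    funext j
    simpa [fourier_sum_repIdem hG hirr hni] using congrArg (fourier (τ j)) hx
  · intro hx
    rw [Finset.sum_mul]
    exact Finset.sum_eq_zero fun i _ => repIdem_mul_eq_zero (congrFun hx i)

theorem finrank_range_mulLeft_sum_repIdem :
    Module.finrank K (LinearMap.range (LinearMap.mulLeft K (∑ i, repIdem (τ i))))
      = s * d ^ 2 := by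
  have hΦ := (AlgHom.pi fun i => fourier (τ i)).toLinearMap.finrank_range_add_finrank_ker
  have he := (LinearMap.mulLeft K (∑ i, repIdem (τ i))).finrank_range_add_finrank_ker
  rw [LinearMap.range_eq_top.2 (surjective_pi_fourier hG hirr hni), finrank_top,
    Module.finrank_pi_fintype, ← ker_mulLeft_sum_repIdem hG hirr hni] at hΦ
  simp only [Module.finrank_matrix, Module.finrank_self, Fintype.card_fin, Finset.sum_const,
    Finset.card_univ, smul_eq_mul, mul_one] at hΦ
  rw [sq]
  omega

end Orbit

end

/-- The two-sided ideal of `F_q[G]` generated by the descended idempotent `e[ρ]` of a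
Galois orbit of size `s` of a `d`-dimensional irreducible representation has
`F_q`-dimension `s·d²`. -/
theorem dim_of_orbit_code (Fq : Type*) [Field Fq] [Fintype Fq] (G : Type*) [Group G]
    [Fintype G] (hco : Nat.Coprime (Fintype.card G) (Fintype.card Fq))
    {d : ℕ} (ρ : MatRep (AlgebraicClosure Fq) G d) (hirr : IsIrreducible ρ)
    (s : ℕ) (τ : Fin s → MatRep (AlgebraicClosure Fq) G d) (henum : OrbitEnum Fq ρ s τ)
    (e₀ : MonoidAlgebra Fq G)
    (heq : ∀ g : G, algebraMap Fq (AlgebraicClosure Fq) (e₀.coeff g) = (∑ i, repIdem (τ i)).coeff g) :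
    Module.finrank Fq ↥(codeSub (TwoSidedIdeal.span {e₀})) = s * d ^ 2 := by
  have hirr_τ : ∀ i, IsIrreducible (τ i) := fun i =>
    let ⟨σ, hσ⟩ := henum.1 i
    (hirr.galConj σ).of_isoRep hσ
  have hG : (Fintype.card G : AlgebraicClosure Fq) ≠ 0 := by
    refine (hco.isUnit_natCast ?_).ne_zero
    rw [← map_natCast (algebraMap Fq _), FiniteField.cast_card_eq_zero, map_zero]
  have hclass : ∀ a b, e₀.coeff (a * b) = e₀.coeff (b * a) := fun a b =>
    (algebraMap Fq (AlgebraicClosure Fq)).injective <| by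
      simp only [heq, MonoidAlgebra.coeff_sum, Finsupp.finsetSum_apply, coeff_repIdem_mul_comm]
  rw [codeSub_span_singleton_of_commute (MonoidAlgebra.mul_comm_of_coeff_mul_comm hclass),
    ← MonoidAlgebra.finrank_range_mulLeft_eq_of_coeff_map _ heq]
  exact finrank_range_mulLeft_sum_repIdem hG hirr_τ fun i j => henum.2.1 i j

end GroupCodeHulls
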